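/- arXiv:math/0507069 — 2 statements merged into one kernel-verified Lean document; each statement's English description precedes it below -/
import Mathlib

section
/- Let Φ : ℝ² → ℝ² be an invertible affine (degree-one) map and let β^{(2n)} have a representing measure μ. Then the pushforward measure μ∘Φ⁻¹ is a representing measure for β̃^{(2n)} where β̃_{ij} = L_β(φ₂ⁱφ₁ʲ), and it has the same cardinality of support; moreover Φ(supp μ) = supp(μ∘Φ⁻¹). -/
/-!
For `i + j ≤ 2n` the function `yⁱxʲ ∘ Φ` is the polynomial `φ₂ⁱφ₁ʲ` of degree at most `i + j`,
a linear combination of monomials of degree `≤ 2n`; so it is `μ`-integrable with integral `L_β(φ₂ⁱφ₁ʲ)`,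
and the change of variables formula for `μ ∘ Φ⁻¹` turns this into the `(i, j)` moment. An affine
map with nonzero determinant is a homeomorphism of `ℝ²`, so it carries open sets to open sets and
`supp μ` bijectively onto `supp (μ ∘ Φ⁻¹)`.
-/

open MeasureTheory Matrix

/-- Index set for the moment matrix `M(n)`: monomials `yⁱxʲ` with `i + j ≤ n`,
encoded as pairs `(i, j)`. -/
abbrev MIdx (n : ℕ) := {v : Fin (n + 1) × Fin (n + 1) // (v.1 : ℕ) + (v.2 : ℕ) ≤ n}

/-- The moment matrix `M(n)(β)`: entry in row `yⁱxʲ`, column `yᵏxˡ` is `β_{i+k, j+l}`. -/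
def momentMat (n : ℕ) (β : ℕ → ℕ → ℝ) : Matrix (MIdx n) (MIdx n) ℝ :=
  Matrix.of fun u v => β ((u.1.1 : ℕ) + (v.1.1 : ℕ)) ((u.1.2 : ℕ) + (v.1.2 : ℕ))

/-- The coefficient vector `p̂` of a two-variable polynomial (convention: `X 0 = x`,
`X 1 = y`; the coordinate of `p̂` at `(i, j)` is the coefficient of `yⁱxʲ`). -/
noncomputable def coeffVec (n : ℕ) (p : MvPolynomial (Fin 2) ℝ) : MIdx n → ℝ :=
  fun v => MvPolynomial.coeff
    (Finsupp.single (0 : Fin 2) ((v.1.2 : ℕ)) + Finsupp.single (1 : Fin 2) ((v.1.1 : ℕ))) p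

/-- `M(n)` is recursively generated: if `p, q, pq` have degree at most `n` and
`p(X,Y) = 0` in the column space, then `(pq)(X,Y) = 0`. -/
def RecursivelyGenerated (n : ℕ) (M : Matrix (MIdx n) (MIdx n) ℝ) : Prop :=
  ∀ p q : MvPolynomial (Fin 2) ℝ, p.totalDegree ≤ n → q.totalDegree ≤ n →
    (p * q).totalDegree ≤ n → M.mulVec (coeffVec n p) = 0 →
      M.mulVec (coeffVec n (p * q)) = 0

/-- The variety `V(M(n))`: common zero set of all polynomials of degree ≤ n whose
coefficient vector is annihilated by `M(n)`. -/
def varietyOf (n : ℕ) (M : Matrix (MIdx n) (MIdx n) ℝ) : Set (ℝ × ℝ) :=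
  {w | ∀ p : MvPolynomial (Fin 2) ℝ, p.totalDegree ≤ n →
    M.mulVec (coeffVec n p) = 0 → MvPolynomial.eval ![w.1, w.2] p = 0}

/-- The Riesz functional `L_β` of a truncated moment sequence. -/
def riesz (β : ℕ → ℕ → ℝ) (p : MvPolynomial (Fin 2) ℝ) : ℝ :=
  ∑ v ∈ p.support, p.coeff v * β (v 1) (v 0)

/-- The (closed) support of a Borel measure on `ℝ²`: points all of whose open
neighborhoods have positive measure. -/
def msupport (μ : Measure (ℝ × ℝ)) : Set (ℝ × ℝ) :=
  {w | ∀ U : Set (ℝ × ℝ), IsOpen U → w ∈ U → μ U ≠ 0}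

/-- `μ` is a representing measure for `β^{(2n)}`. -/
def IsRepMeasure (n : ℕ) (β : ℕ → ℕ → ℝ) (μ : Measure (ℝ × ℝ)) : Prop :=
  ∀ i j : ℕ, i + j ≤ 2 * n →
    Integrable (fun w : ℝ × ℝ => w.2 ^ i * w.1 ^ j) μ ∧
      β i j = ∫ w : ℝ × ℝ, w.2 ^ i * w.1 ^ j ∂μ


/-- The degree-one polynomial `a + b·x + c·y` (with `X 0 = x`, `X 1 = y`). -/
noncomputable def degOnePoly (a b c : ℝ) : MvPolynomial (Fin 2) ℝ :=
  MvPolynomial.C a + MvPolynomial.C b * MvPolynomial.X 0 + MvPolynomial.C c * MvPolynomial.X 1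

open MvPolynomial

lemma eval_eq_sum_coeff_mul_monomial (p : MvPolynomial (Fin 2) ℝ) (w : ℝ × ℝ) :
    eval ![w.1, w.2] p = ∑ v ∈ p.support, p.coeff v * (w.2 ^ v 1 * w.1 ^ v 0) := by
  rw [eval_eq']
  refine Finset.sum_congr rfl fun v _ => ?_
  simp [Fin.prod_univ_two, mul_comm]

lemma degree_le_of_mem_support {p : MvPolynomial (Fin 2) ℝ} {d : ℕ} (hp : p.totalDegree ≤ d)
    {v : Fin 2 →₀ ℕ} (hv : v ∈ p.support) : v 1 + v 0 ≤ d := by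
  have h := le_totalDegree hv
  rw [Finsupp.sum_fintype _ _ fun _ => rfl, Fin.sum_univ_two] at h
  omega

namespace IsRepMeasure

variable {n : ℕ} {β : ℕ → ℕ → ℝ} {μ : Measure (ℝ × ℝ)}

lemma integrable_eval (hrep : IsRepMeasure n β μ) {p : MvPolynomial (Fin 2) ℝ}
    (hp : p.totalDegree ≤ 2 * n) : Integrable (fun w : ℝ × ℝ => eval ![w.1, w.2] p) μ := by
  simp_rw [eval_eq_sum_coeff_mul_monomial]
  exact integrable_finsetSum _ fun v hv =>
    (hrep _ _ (degree_le_of_mem_support hp hv)).1.const_mul _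

lemma integral_eval (hrep : IsRepMeasure n β μ) {p : MvPolynomial (Fin 2) ℝ}
    (hp : p.totalDegree ≤ 2 * n) : ∫ w : ℝ × ℝ, eval ![w.1, w.2] p ∂μ = riesz β p := by
  simp_rw [eval_eq_sum_coeff_mul_monomial]
  rw [integral_finsetSum _ fun v hv =>
    (hrep _ _ (degree_le_of_mem_support hp hv)).1.const_mul _]
  refine Finset.sum_congr rfl fun v hv => ?_
  rw [integral_const_mul, ← (hrep _ _ (degree_le_of_mem_support hp hv)).2]

lemma map_of_totalDegree_le_one (hrep : IsRepMeasure n β μ) {P Q : MvPolynomial (Fin 2) ℝ}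
    (hP : P.totalDegree ≤ 1) (hQ : Q.totalDegree ≤ 1) :
    IsRepMeasure n (fun i j => riesz β (Q ^ i * P ^ j))
      (μ.map fun w => (eval ![w.1, w.2] P, eval ![w.1, w.2] Q)) := by
  intro i j hij
  have hf : Measurable fun w : ℝ × ℝ => (eval ![w.1, w.2] P, eval ![w.1, w.2] Q) :=
    Continuous.measurable <| by
      refine .prodMk ((continuous_eval (p := P)).comp ?_) ((continuous_eval (p := Q)).comp ?_)
      all_goals fun_prop
  have hmono : AEStronglyMeasurable (fun w : ℝ × ℝ => w.2 ^ i * w.1 ^ j)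
      (μ.map fun w => (eval ![w.1, w.2] P, eval ![w.1, w.2] Q)) :=
    (by fun_prop : Continuous fun w : ℝ × ℝ => w.2 ^ i * w.1 ^ j).aestronglyMeasurable
  have hdeg : (Q ^ i * P ^ j).totalDegree ≤ 2 * n := calc
    _ ≤ i * Q.totalDegree + j * P.totalDegree :=
      (totalDegree_mul _ _).trans (add_le_add (totalDegree_pow _ _) (totalDegree_pow _ _))
    _ ≤ 2 * n := by nlinarith
  have hcomp : (fun w : ℝ × ℝ => w.2 ^ i * w.1 ^ j) ∘
      (fun w : ℝ × ℝ => (eval ![w.1, w.2] P, eval ![w.1, w.2] Q)) =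
      fun w => eval ![w.1, w.2] (Q ^ i * P ^ j) := by
    simp only [Function.comp_def, map_mul, map_pow]
  refine ⟨?_, ?_⟩
  · rw [integrable_map_measure hmono hf.aemeasurable, hcomp]
    exact hrep.integrable_eval hdeg
  · rw [integral_map hf.aemeasurable hmono]
    exact (hrep.integral_eval hdeg).symm.trans (congrArg (integral μ) hcomp.symm)

end IsRepMeasure

lemma Homeomorph.image_msupport (e : ℝ × ℝ ≃ₜ ℝ × ℝ) (μ : Measure (ℝ × ℝ)) :
    e '' msupport μ = msupport (μ.map e) := by
  ext z
  rw [e.image_eq_preimage_symm]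
  refine ⟨fun hz U hU hzU => ?_, fun hz V hV hzV => ?_⟩
  · rw [Measure.map_apply e.measurable hU.measurableSet]
    exact hz _ (hU.preimage e.continuous) (by simpa using hzU)
  · have hV' : IsOpen (e.symm ⁻¹' V) := hV.preimage e.symm.continuous
    simpa [Measure.map_apply e.measurable hV'.measurableSet, Set.preimage_preimage] using
      hz _ hV' hzV

lemma degOnePoly_totalDegree_le (a b c : ℝ) : (degOnePoly a b c).totalDegree ≤ 1 := by
  refine (totalDegree_add _ _).trans (max_le ((totalDegree_add _ _).trans (max_le ?_ ?_)) ?_)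
  · simp
  all_goals exact (totalDegree_mul _ _).trans (by simp)

@[simp]
lemma eval_degOnePoly (a b c : ℝ) (w : ℝ × ℝ) :
    eval ![w.1, w.2] (degOnePoly a b c) = a + b * w.1 + c * w.2 := by
  simp [degOnePoly]

noncomputable def degOneHomeomorph (a₁ b₁ c₁ a₂ b₂ c₂ : ℝ) (h : b₁ * c₂ ≠ b₂ * c₁) :
    ℝ × ℝ ≃ₜ ℝ × ℝ where
  toFun w := (a₁ + b₁ * w.1 + c₁ * w.2, a₂ + b₂ * w.1 + c₂ * w.2)
  -- Cramer's rule
  invFun w := ((c₂ * (w.1 - a₁) - c₁ * (w.2 - a₂)) / (b₁ * c₂ - b₂ * c₁),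
    (b₁ * (w.2 - a₂) - b₂ * (w.1 - a₁)) / (b₁ * c₂ - b₂ * c₁))
  left_inv w := by
    have hD : b₁ * c₂ - b₂ * c₁ ≠ 0 := sub_ne_zero.mpr h
    ext
    · linear_combination w.1 * mul_inv_cancel₀ hD
    · linear_combination w.2 * mul_inv_cancel₀ hD
  right_inv w := by
    have hD : b₁ * c₂ - b₂ * c₁ ≠ 0 := sub_ne_zero.mpr h
    ext
    · linear_combination (w.1 - a₁) * mul_inv_cancel₀ hD
    · linear_combination (w.2 - a₂) * mul_inv_cancel₀ hD

lemma coe_degOneHomeomorph (a₁ b₁ c₁ a₂ b₂ c₂ : ℝ) (h : b₁ * c₂ ≠ b₂ * c₁) :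
    ⇑(degOneHomeomorph a₁ b₁ c₁ a₂ b₂ c₂ h) =
      fun w => (a₁ + b₁ * w.1 + c₁ * w.2, a₂ + b₂ * w.1 + c₂ * w.2) :=
  rfl

/-- Pushforward under an invertible degree-one map: if `μ` represents `β^{(2n)}`
and `Φ(x,y) = (a₁+b₁x+c₁y, a₂+b₂x+c₂y)` with `b₁c₂ ≠ b₂c₁`, then `μ∘Φ⁻¹` is a
representing measure for `β̃`, where `β̃_{ij} = L_β(φ₂ⁱφ₁ʲ)`; moreover
`Φ(supp μ) = supp (μ∘Φ⁻¹)` and the supports have the same cardinality. -/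
theorem pushforward_repMeasure_degreeOne (n : ℕ) (β : ℕ → ℕ → ℝ)
    (μ : Measure (ℝ × ℝ)) (hrep : IsRepMeasure n β μ)
    (a₁ b₁ c₁ a₂ b₂ c₂ : ℝ) (hΦ : b₁ * c₂ ≠ b₂ * c₁) :
    IsRepMeasure n
        (fun i j => riesz β (degOnePoly a₂ b₂ c₂ ^ i * degOnePoly a₁ b₁ c₁ ^ j))
        (Measure.map
          (fun w : ℝ × ℝ => (a₁ + b₁ * w.1 + c₁ * w.2, a₂ + b₂ * w.1 + c₂ * w.2)) μ) ∧
      (fun w : ℝ × ℝ => (a₁ + b₁ * w.1 + c₁ * w.2, a₂ + b₂ * w.1 + c₂ * w.2)) ''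
          msupport μ =
        msupport (Measure.map
          (fun w : ℝ × ℝ => (a₁ + b₁ * w.1 + c₁ * w.2, a₂ + b₂ * w.1 + c₂ * w.2)) μ) ∧
      Cardinal.mk (msupport μ) =
        Cardinal.mk (msupport (Measure.map
          (fun w : ℝ × ℝ => (a₁ + b₁ * w.1 + c₁ * w.2, a₂ + b₂ * w.1 + c₂ * w.2)) μ)) := by
  have hmoments := hrep.map_of_totalDegree_le_one (degOnePoly_totalDegree_le a₁ b₁ c₁)
    (degOnePoly_totalDegree_le a₂ b₂ c₂)
  simp only [eval_degOnePoly] at hmoments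
  have hsupp := (degOneHomeomorph a₁ b₁ c₁ a₂ b₂ c₂ hΦ).image_msupport μ
  have hcard := Cardinal.mk_image_eq (s := msupport μ)
    (degOneHomeomorph a₁ b₁ c₁ a₂ b₂ c₂ hΦ).injective
  rw [coe_degOneHomeomorph] at hsupp hcard
  exact ⟨hmoments, hsupp, hsupp ▸ hcard.symm⟩
end

section
/- Let M(n) be a positive semidefinite, recursively generated moment matrix with column relation YX = 0. Then every nonzero column of M(n) equals a column indexed by a monomial in {1, x, y, x², y², …, xⁿ, yⁿ}, and hence rank M(n) ≤ 2n+1. -/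
open MeasureTheory Matrix

/-!
Recursive generation propagates the relation `YX = 0` to every column `yⁱxʲ` with `i, j ≥ 1`,
since `yⁱxʲ = yx · yⁱ⁻¹xʲ⁻¹`. Only the `2n + 1` columns `1, x, …, xⁿ, y, …, yⁿ` can then be
nonzero, and they span the column space.
-/

open MvPolynomial Finset

theorem MvPolynomial.totalDegree_X_pow_mul_X_pow_le {σ R : Type*} [CommSemiring R] (s t : σ)
    (a b : ℕ) : (X s ^ a * X t ^ b : MvPolynomial σ R).totalDegree ≤ a + b := by
  rcases subsingleton_or_nontrivial R with _ | _
  · simp [Subsingleton.elim (X s ^ a * X t ^ b : MvPolynomial σ R) 0]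
  · simpa only [totalDegree_X_pow] using totalDegree_mul (X s ^ a : MvPolynomial σ R) (X t ^ b)

theorem Matrix.rank_le_card_of_col_support_subset {m n R : Type*} [Fintype m] [Fintype n]
    [Field R] (A : Matrix m n R) (s : Finset n) (hz : Function.support A.col ⊆ s) :
    A.rank ≤ s.card := by
  rw [← rank_transpose]
  exact rank_le_card_of_support_subset Aᵀ s hz

namespace MIdx

variable {n : ℕ}

theorem ext_iff {u v : MIdx n} : u = v ↔ (u.1.1 : ℕ) = v.1.1 ∧ (u.1.2 : ℕ) = v.1.2 := by
  rw [Subtype.ext_iff, Prod.ext_iff, Fin.ext_iff, Fin.ext_iff]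

/-- The exponent of the monomial `yⁱxʲ` indexed by `u = (i, j)`. -/
noncomputable def exponent (u : MIdx n) : Fin 2 →₀ ℕ :=
  Finsupp.single 0 (u.1.2 : ℕ) + Finsupp.single 1 (u.1.1 : ℕ)

theorem exponent_injective : Function.Injective (exponent (n := n)) := by
  intro u v h
  have h0 := DFunLike.congr_fun h 0
  have h1 := DFunLike.congr_fun h 1
  simp only [exponent, Finsupp.add_apply, Finsupp.single_apply, Fin.isValue, ↓reduceIte, add_zero,
    zero_add, zero_ne_one, one_ne_zero] at h0 h1
  exact ext_iff.2 ⟨h1, h0⟩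

theorem X_pow_mul_X_pow_eq_monomial (u : MIdx n) :
    (X 1 ^ (u.1.1 : ℕ) * X 0 ^ (u.1.2 : ℕ) : MvPolynomial (Fin 2) ℝ) =
      monomial u.exponent 1 := by
  rw [X_pow_eq_monomial, X_pow_eq_monomial, monomial_mul, one_mul, exponent, add_comm]

theorem coeffVec_X_pow_mul_X_pow (u : MIdx n) :
    coeffVec n (X 1 ^ (u.1.1 : ℕ) * X 0 ^ (u.1.2 : ℕ)) = Pi.single u 1 := by
  funext v
  change coeff v.exponent _ = _
  simp only [X_pow_mul_X_pow_eq_monomial, coeff_monomial, exponent_injective.eq_iff,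
    Pi.single_apply, eq_comm]

def IsPurePower (u : MIdx n) : Prop := (u.1.1 : ℕ) = 0 ∨ (u.1.2 : ℕ) = 0

instance : DecidablePred (IsPurePower (n := n)) :=
  fun _ => instDecidableOr

/-- `yⁱxʲ ↦ j - i` is injective on the pure powers, with values in `[-n, n]`. -/
theorem card_isPurePower_le : #{u : MIdx n | u.IsPurePower} ≤ 2 * n + 1 :=
  calc #{u : MIdx n | u.IsPurePower} ≤ #(Icc (-n : ℤ) n) := by
        refine card_le_card_of_injOn (fun u => ((u.1.2 : ℕ) : ℤ) - (u.1.1 : ℕ)) (fun u _ => ?_) ?_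
        · have := u.2
          simp only [coe_Icc, Set.mem_Icc]
          omega
        · intro u hu v hv huv
          rw [mem_coe, mem_filter_univ] at hu hv
          simp only [IsPurePower] at hu hv huv
          rw [ext_iff]
          omega
    _ = 2 * n + 1 := by rw [Int.card_Icc]; omega

end MIdx

namespace RecursivelyGenerated

variable {n : ℕ} {M : Matrix (MIdx n) (MIdx n) ℝ}

/-- The monomial `yⁱxʲ` with `i, j ≥ 1` is the multiple `yx · yⁱ⁻¹xʲ⁻¹` of `yx`. -/
theorem col_eq_zero_of_yx (hrg : RecursivelyGenerated n M)
    (hyx : M *ᵥ coeffVec n (X 1 * X 0) = 0) {u : MIdx n} (hu : ¬ u.IsPurePower) :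
    M.col u = 0 := by
  obtain ⟨hi, hj⟩ : (u.1.1 : ℕ) ≠ 0 ∧ (u.1.2 : ℕ) ≠ 0 := by
    simpa only [MIdx.IsPurePower, not_or] using hu
  obtain ⟨a, ha⟩ := Nat.exists_eq_add_one_of_ne_zero hi
  obtain ⟨b, hb⟩ := Nat.exists_eq_add_one_of_ne_zero hj
  have hdeg : (u.1.1 : ℕ) + u.1.2 ≤ n := u.2
  have hfactor : X 1 * X 0 * (X 1 ^ a * X 0 ^ b) =
      (X 1 ^ (u.1.1 : ℕ) * X 0 ^ (u.1.2 : ℕ) : MvPolynomial (Fin 2) ℝ) := by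
    rw [ha, hb]
    ring
  rw [← mulVec_single_one, ← MIdx.coeffVec_X_pow_mul_X_pow, ← hfactor]
  refine hrg _ _ ?_ ?_ ?_ hyx
  · simpa only [pow_one] using (totalDegree_X_pow_mul_X_pow_le (R := ℝ) 1 0 1 1).trans
      (by omega : 1 + 1 ≤ n)
  · exact (totalDegree_X_pow_mul_X_pow_le 1 0 a b).trans (by omega)
  · rw [hfactor]
    exact (totalDegree_X_pow_mul_X_pow_le 1 0 _ _).trans hdeg

end RecursivelyGenerated

theorem columns_eq_purePower_of_yx_eq_zero_general (n : ℕ) (β : ℕ → ℕ → ℝ)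
    (hrg : RecursivelyGenerated n (momentMat n β))
    (hyx : (momentMat n β).mulVec
      (coeffVec n (MvPolynomial.X 1 * MvPolynomial.X 0)) = 0) :
    (∀ u : MIdx n, (fun r : MIdx n => momentMat n β r u) ≠ 0 →
        ∃ v : MIdx n, ((v.1.1 : ℕ) = 0 ∨ (v.1.2 : ℕ) = 0) ∧
          ∀ r : MIdx n, momentMat n β r u = momentMat n β r v) ∧
      (momentMat n β).rank ≤ 2 * n + 1 := by
  have hpure :
      Function.support (momentMat n β).col ⊆ ({u | u.IsPurePower} : Finset (MIdx n)) := by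
    intro u hu
    rw [mem_coe, mem_filter_univ]
    by_contra hnot
    exact hu (hrg.col_eq_zero_of_yx hyx hnot)
  refine ⟨fun u hu => ⟨u, ?_, fun _ => rfl⟩, ?_⟩
  · exact (mem_filter_univ u).1 (hpure hu)
  · exact (rank_le_card_of_col_support_subset _ _ hpure).trans MIdx.card_isPurePower_le

/-- If `M(n)` is positive semidefinite, recursively generated, and satisfies the
column relation `YX = 0`, then every nonzero column of `M(n)` equals a column
indexed by a pure power `xᵏ` or `yᵏ`; hence `rank M(n) ≤ 2n + 1`. -/
theorem columns_eq_purePower_of_yx_eq_zero (n : ℕ) (hn : 2 ≤ n) (β : ℕ → ℕ → ℝ)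
    (hpsd : (momentMat n β).PosSemidef)
    (hrg : RecursivelyGenerated n (momentMat n β))
    (hyx : (momentMat n β).mulVec
      (coeffVec n (MvPolynomial.X 1 * MvPolynomial.X 0)) = 0) :
    (∀ u : MIdx n, (fun r : MIdx n => momentMat n β r u) ≠ 0 →
        ∃ v : MIdx n, ((v.1.1 : ℕ) = 0 ∨ (v.1.2 : ℕ) = 0) ∧
          ∀ r : MIdx n, momentMat n β r u = momentMat n β r v) ∧
      (momentMat n β).rank ≤ 2 * n + 1 :=
  columns_eq_purePower_of_yx_eq_zero_general n β hrg hyx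
end
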